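/- Every proper principal submatrix of a bi-diagonal south-west (bdsw) matrix is nonsingular. -/

import Mathlib

open Matrix Finset
/-- A *bi-diagonal south-west* (bdsw) matrix: the diagonal, the super diagonal and the
south-west corner entry are nonzero, and all other entries are zero. -/
def Bdsw {n : ℕ} (B : Matrix (Fin (n + 2)) (Fin (n + 2)) ℝ) : Prop :=
  (∀ i, B i i ≠ 0) ∧
  (∀ i j : Fin (n + 2), (j : ℕ) = (i : ℕ) + 1 → B i j ≠ 0) ∧
  (B (Fin.last (n + 1)) 0 ≠ 0) ∧
  (∀ i j : Fin (n + 2), i ≠ j → (j : ℕ) ≠ (i : ℕ) + 1 →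
    ¬(i = Fin.last (n + 1) ∧ j = 0) → B i j = 0)

/-! Off the diagonal, a bdsw matrix is supported on the cyclic superdiagonal `j = i + 1` in
`Fin (n + 2)`. Pick `k ∉ α` and order the indices cyclically starting at `k + 1`, i.e. by
`i - (k + 1)`: every step `i ↦ i + 1` with `i ≠ k` increases this key, and the one step that
wraps around starts at `k`, which is missing from `α`. So the principal submatrix on `α` is upper
triangular for this order, and its determinant is the product of the nonzero diagonal entries. -/

theorem Matrix.BlockTriangular.det_eq_prod_diag_of_injective {m α R : Type*} [Fintype m]
    [DecidableEq m] [CommRing R] [LinearOrder α] {M : Matrix m m R} {b : m → α}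
    (hM : M.BlockTriangular b) (hb : Function.Injective b) : M.det = ∏ i, M i i :=
  letI : LinearOrder m := LinearOrder.lift' b hb
  det_of_isUpperTriangular hM

theorem Fin.sub_lt_add_one_sub {m : ℕ} {i k : Fin (m + 1)} (hik : i ≠ k) :
    i - (k + 1) < i + 1 - (k + 1) := by
  have hshift : i + 1 - (k + 1) = i - (k + 1) + 1 := by abel
  rw [hshift, Fin.lt_add_one_iff, Fin.lt_last_iff_ne_last]
  intro hlast
  rw [sub_eq_iff_eq_add, add_comm k, ← add_assoc, Fin.last_add_one, zero_add] at hlast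
  exact hik hlast

theorem Fin.eq_add_one_of_val_eq_val_add_one {m : ℕ} {i j : Fin (m + 1)}
    (h : (j : ℕ) = i + 1) : j = i + 1 := by
  have hi : i ≠ Fin.last m := by
    rintro rfl
    simp only [Fin.val_last] at h
    omega
  ext
  rw [Fin.val_add_one_of_lt (Fin.lt_last_iff_ne_last.mpr hi), h]

theorem Bdsw.apply_eq_zero {n : ℕ} {A : Matrix (Fin (n + 2)) (Fin (n + 2)) ℝ} (hA : Bdsw A)
    {i j : Fin (n + 2)} (hji : j ≠ i) (hj : j ≠ i + 1) : A i j = 0 := by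
  refine hA.2.2.2 i j (Ne.symm hji) (fun h => hj (Fin.eq_add_one_of_val_eq_val_add_one h)) ?_
  rintro ⟨rfl, rfl⟩
  exact hj (Fin.last_add_one _).symm

theorem Bdsw.blockTriangular_submatrix {n : ℕ} {A : Matrix (Fin (n + 2)) (Fin (n + 2)) ℝ}
    (hA : Bdsw A) {α : Finset (Fin (n + 2))} {k : Fin (n + 2)} (hk : k ∉ α) :
    (A.submatrix (fun i : α => (i : Fin (n + 2)))
      (fun j : α => (j : Fin (n + 2)))).BlockTriangular
      (fun i => (i : Fin (n + 2)) - (k + 1)) := by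
  intro i j hlt
  refine hA.apply_eq_zero (fun h => ?_) (fun h => ?_)
  · exact lt_irrefl _ (Subtype.ext h ▸ hlt)
  · have hik : (i : Fin (n + 2)) ≠ k := fun h => hk (h ▸ i.2)
    exact (Fin.sub_lt_add_one_sub hik).not_gt (h ▸ hlt)

theorem stmt2_general {n : ℕ} (A : Matrix (Fin (n + 2)) (Fin (n + 2)) ℝ) (hA : Bdsw A)
    (α : Finset (Fin (n + 2))) (hproper : α ≠ Finset.univ) :
    (A.submatrix (fun i : {x // x ∈ α} => (i : Fin (n + 2)))
      (fun j : {x // x ∈ α} => (j : Fin (n + 2)))).det ≠ 0 := by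
  obtain ⟨k, -, hk⟩ := Finset.exists_of_ssubset (Finset.ssubset_univ_iff.mpr hproper)
  have hinj : Function.Injective fun i : α => (i : Fin (n + 2)) - (k + 1) :=
    sub_left_injective.comp Subtype.val_injective
  rw [(hA.blockTriangular_submatrix hk).det_eq_prod_diag_of_injective hinj]
  exact Finset.prod_ne_zero_iff.mpr fun i _ => hA.1 i

theorem stmt2 {n : ℕ} (A : Matrix (Fin (n + 2)) (Fin (n + 2)) ℝ) (hA : Bdsw A)
    (α : Finset (Fin (n + 2))) (hne : α.Nonempty) (hproper : α ≠ Finset.univ) :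
    (A.submatrix (fun i : {x // x ∈ α} => (i : Fin (n + 2)))
      (fun j : {x // x ∈ α} => (j : Fin (n + 2)))).det ≠ 0 :=
  stmt2_general A hA α hproper
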